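/- Let U_1, ..., U_G be M×r_g complex matrices with orthonormal columns satisfying U_g^H U_j = 0 for g ≠ j, let Λ_g and Ξ_g be positive definite r_g×r_g Hermitian matrices, let Δ = σ² I_M with σ² > 0 and α > 0. Define C_g = U_g Λ_g U_g^H and E_g = U_g Ξ_g U_g^H. Then C_g - C_g (C_g + Δ + (1/α) Σ_j U_j Ξ_j U_j^H)^{-1} C_g = C_g - C_g (C_g + Δ + (1/α) E_g)^{-1} C_g = U_g (Λ_g^{-1} + (σ² I + (1/α)Ξ_g)^{-1})^{-1} U_g^H. -/

import Mathlib

/-!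
For `X = ∑ⱼ Uⱼ Ξⱼ Uⱼᴴ` as well as `X = E_g`, orthogonality gives `X U_g = U_g Ξ_g`, so the column
space of `U_g` is invariant under `A = C_g + Δ + α⁻¹ X`, on which `A` acts as `Λ_g + T` with
`T = σ² I + α⁻¹ Ξ_g`. Hence `A⁻¹ U_g = U_g (Λ_g + T)⁻¹`, so
`C_g - C_g A⁻¹ C_g = U_g (Λ_g - Λ_g (Λ_g + T)⁻¹ Λ_g) U_gᴴ`, and the middle factor is
`(Λ_g⁻¹ + T⁻¹)⁻¹` by the Woodbury identity.
-/

open Matrix ComplexOrder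

namespace Matrix

variable {R : Type*} [CommRing R] {m n : Type*} [Fintype m] [Fintype n]

theorem sum_mul_mul_mul_mul_of_mul_eq {ι : Type*} [Fintype ι] {κ : ι → Type*}
    [∀ i, Fintype (κ i)] [∀ i, DecidableEq (κ i)] (V : ∀ i, Matrix m (κ i) R)
    (W : ∀ i, Matrix (κ i) m R) (X : ∀ i, Matrix (κ i) (κ i) R) (i : ι) (hWV : W i * V i = 1)
    (horth : ∀ j, j ≠ i → W j * V i = 0) :
    (∑ j, V j * X j * W j) * V i = V i * X i := by
  rw [Matrix.sum_mul, Finset.sum_eq_single i (fun j _ hj => by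
    rw [Matrix.mul_assoc, horth j hj, Matrix.mul_zero]) (by simp),
    Matrix.mul_assoc, hWV, Matrix.mul_one]

variable [DecidableEq m] [DecidableEq n]

theorem sub_mul_inv_add_mul_eq_inv_add_inv {L T : Matrix n n R} (hL : IsUnit L.det)
    (hT : IsUnit T.det) (hLT : IsUnit (L + T).det) :
    L - L * (L + T)⁻¹ * L = (L⁻¹ + T⁻¹)⁻¹ := by
  have hfactor : (L⁻¹ + T⁻¹) * L = T⁻¹ * (L + T) := by
    rw [Matrix.add_mul, Matrix.mul_add, nonsing_inv_mul _ hL, nonsing_inv_mul _ hT, add_comm]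
  have hright : (L⁻¹ + T⁻¹) * (L * (L + T)⁻¹ * T) = 1 := by
    rw [← Matrix.mul_assoc, ← Matrix.mul_assoc, hfactor, Matrix.mul_assoc T⁻¹,
      mul_nonsing_inv _ hLT, Matrix.mul_one, nonsing_inv_mul _ hT]
  calc L - L * (L + T)⁻¹ * L = L * (L + T)⁻¹ * ((L + T) - L) := by
        rw [Matrix.mul_sub, Matrix.mul_assoc L (L + T)⁻¹ (L + T), nonsing_inv_mul _ hLT,
          Matrix.mul_one]
    _ = (L⁻¹ + T⁻¹)⁻¹ := by rw [add_sub_cancel_left, inv_eq_right_inv hright]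

theorem inv_mul_eq_mul_inv_of_mul_eq_mul {A : Matrix m m R} {V : Matrix m n R}
    {K : Matrix n n R} (hA : IsUnit A.det) (hK : IsUnit K.det) (h : A * V = V * K) :
    A⁻¹ * V = V * K⁻¹ := by
  rw [← Matrix.mul_one (A⁻¹ * V), ← mul_nonsing_inv _ hK, ← Matrix.mul_assoc,
    Matrix.mul_assoc A⁻¹, ← h, ← Matrix.mul_assoc, nonsing_inv_mul _ hA, Matrix.one_mul]

theorem mul_mul_sub_mul_inv_mul_of_mul_eq_mul_add {A : Matrix m m R} {V : Matrix m n R}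
    {W : Matrix n m R} {L T : Matrix n n R} (hWV : W * V = 1) (hA : IsUnit A.det)
    (hL : IsUnit L.det) (hT : IsUnit T.det) (hLT : IsUnit (L + T).det)
    (hAV : A * V = V * (L + T)) :
    V * L * W - V * L * W * A⁻¹ * (V * L * W) = V * (L⁻¹ + T⁻¹)⁻¹ * W := by
  have hcompress : V * L * W * A⁻¹ * (V * L * W) = V * (L * (L + T)⁻¹ * L) * W := by
    rw [Matrix.mul_assoc _ A⁻¹, ← Matrix.mul_assoc A⁻¹, ← Matrix.mul_assoc A⁻¹,
      inv_mul_eq_mul_inv_of_mul_eq_mul hA hLT hAV]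
    simp only [Matrix.mul_assoc]
    rw [← Matrix.mul_assoc W, hWV, Matrix.one_mul]
  rw [hcompress, ← sub_mul_inv_add_mul_eq_inv_add_inv hL hT hLT, Matrix.mul_sub, Matrix.sub_mul]

end Matrix

theorem stmt_2 {M G : ℕ} (r : Fin G → ℕ)
    (U : ∀ g : Fin G, Matrix (Fin M) (Fin (r g)) ℂ)
    (hU : ∀ g, (U g)ᴴ * U g = 1)
    (horth : ∀ g j, g ≠ j → (U g)ᴴ * U j = 0)
    (Λ Ξ : ∀ g : Fin G, Matrix (Fin (r g)) (Fin (r g)) ℂ)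
    (hΛ : ∀ g, (Λ g).PosDef) (hΞ : ∀ g, (Ξ g).PosDef)
    (σ2 α : ℝ) (hσ : 0 < σ2) (hα : 0 < α)
    (Δ : Matrix (Fin M) (Fin M) ℂ) (hΔ : Δ = (σ2 : ℂ) • 1)
    (C E : Fin G → Matrix (Fin M) (Fin M) ℂ)
    (hC : ∀ g, C g = U g * Λ g * (U g)ᴴ)
    (hE : ∀ g, E g = U g * Ξ g * (U g)ᴴ)
    (g : Fin G) :
    C g - C g * (C g + Δ + (α⁻¹ : ℂ) • ∑ j, U j * Ξ j * (U j)ᴴ)⁻¹ * C g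
        = C g - C g * (C g + Δ + (α⁻¹ : ℂ) • E g)⁻¹ * C g
      ∧ C g - C g * (C g + Δ + (α⁻¹ : ℂ) • E g)⁻¹ * C g
        = U g * ((Λ g)⁻¹ + ((σ2 : ℂ) • 1 + (α⁻¹ : ℂ) • Ξ g)⁻¹)⁻¹ * (U g)ᴴ := by
  set T := (σ2 : ℂ) • (1 : Matrix (Fin (r g)) (Fin (r g)) ℂ) + (α⁻¹ : ℂ) • Ξ g
  have hα' : (0 : ℂ) ≤ (α : ℂ)⁻¹ := by positivity
  have hσ1 : ∀ k, ((σ2 : ℂ) • (1 : Matrix (Fin k) (Fin k) ℂ)).PosDef :=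
    fun _ => PosDef.one.smul (by exact_mod_cast hσ)
  have hT : T.PosDef := (hσ1 _).add_posSemidef ((hΞ g).posSemidef.smul hα')
  have hCpsd : (C g).PosSemidef := hC g ▸ (hΛ g).posSemidef.mul_mul_conjTranspose_same (U g)
  have hmse : ∀ X : Matrix (Fin M) (Fin M) ℂ, X.PosSemidef → X * U g = U g * Ξ g →
      C g - C g * (C g + Δ + (α⁻¹ : ℂ) • X)⁻¹ * C g
        = U g * ((Λ g)⁻¹ + T⁻¹)⁻¹ * (U g)ᴴ := by
    intro X hX hXU
    have hA : (C g + Δ + (α⁻¹ : ℂ) • X).PosDef := by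
      rw [hΔ, add_comm (C g)]
      exact ((hσ1 M).add_posSemidef hCpsd).add_posSemidef (hX.smul hα')
    have hAU : (C g + Δ + (α⁻¹ : ℂ) • X) * U g = U g * (Λ g + T) := by
      rw [Matrix.add_mul, Matrix.add_mul, Matrix.smul_mul, hXU, hC g, hΔ, Matrix.mul_assoc,
        hU g, Matrix.mul_one, Matrix.smul_mul, Matrix.one_mul, Matrix.mul_add, Matrix.mul_add,
        Matrix.mul_smul, Matrix.mul_smul, Matrix.mul_one]
      abel
    have h := mul_mul_sub_mul_inv_mul_of_mul_eq_mul_add (hU g) hA.det_pos.ne'.isUnit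
      (hΛ g).det_pos.ne'.isUnit hT.det_pos.ne'.isUnit ((hΛ g).add hT).det_pos.ne'.isUnit hAU
    rwa [← hC g] at h
  have hmseE := hmse (E g) (hE g ▸ (hΞ g).posSemidef.mul_mul_conjTranspose_same (U g))
    (by rw [hE g, Matrix.mul_assoc, hU g, Matrix.mul_one])
  refine ⟨(hmse _ ?_ ?_).trans hmseE.symm, hmseE⟩
  · exact posSemidef_sum _ fun j _ => (hΞ j).posSemidef.mul_mul_conjTranspose_same (U j)
  · exact sum_mul_mul_mul_mul_of_mul_eq U (fun j => (U j)ᴴ) Ξ g (hU g) fun j hj => horth j g hj
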